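/- Let (f,g) be an acute basis of ℤ², i.e. |det(f,g)| = 1 and ⟨f,g⟩ ≥ 0. Then either f is a parent of g, or g is a parent of f, or ‖f‖ = ‖g‖ = 1. -/

import Mathlib

/-- Vectors of `ℤ²`. -/
abbrev V : Type := ℤ × ℤ

/-- Determinant of two vectors of `ℤ²`. -/
def det2 (f g : V) : ℤ := f.1 * g.2 - f.2 * g.1

/-- Standard inner product on `ℤ²`. -/
def dot (f g : V) : ℤ := f.1 * g.1 + f.2 * g.2

/-- Squared euclidean norm on `ℤ²`. -/
def nsq (e : V) : ℤ := e.1 ^ 2 + e.2 ^ 2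

/-- A vector of `ℤ²` is irreducible iff its coordinates are coprime. -/
def Irred (e : V) : Prop := Int.gcd e.1 e.2 = 1

/-- `(f, g)` are the parents of `e` : they form a direct acute basis summing to `e`. -/
def IsParents (f g e : V) : Prop := e = f + g ∧ det2 f g = 1 ∧ 0 ≤ dot f g

/-- `f` is a parent of `e`. -/
def IsParent (f e : V) : Prop := ∃ g : V, IsParents f g e ∨ IsParents g f e

/-- Embedding of `ℤ²` into `ℝ²`. -/
def toR (e : V) : ℝ × ℝ := ((e.1 : ℝ), (e.2 : ℝ))


/-!
Write `d = ⟨f, g⟩`. If `⟨f, g - f⟩ ≥ 0` then `(f, g - f)` are the parents of `g`, and if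
`⟨f - g, g⟩ ≥ 0` then `(f - g, g)` are the parents of `f`: subtracting one vector of a basis
from the other does not change the determinant. Otherwise `d < ‖f‖²` and `d < ‖g‖²`, and
Lagrange's identity `det² + d² = ‖f‖² ‖g‖²` gives `1 + d² ≥ (d + 1)²`, so `d = 0` and
`‖f‖² ‖g‖² = 1`. A basis with determinant `-1` becomes one with determinant `1` after swapping
`f` and `g`, which leaves the conclusion unchanged.
-/

lemma det2_comm (f g : V) : det2 g f = -det2 f g := by
  simp only [det2]; ring

lemma dot_comm (f g : V) : dot g f = dot f g := by
  simp only [dot]; ring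

lemma det2_sub_self_right (f g : V) : det2 f (g - f) = det2 f g := by
  simp only [det2, Prod.fst_sub, Prod.snd_sub]; ring

lemma det2_sub_self_left (f g : V) : det2 (f - g) g = det2 f g := by
  simp only [det2, Prod.fst_sub, Prod.snd_sub]; ring

lemma dot_sub_self_right (f g : V) : dot f (g - f) = dot f g - nsq f := by
  simp only [dot, nsq, Prod.fst_sub, Prod.snd_sub]; ring

lemma dot_sub_self_left (f g : V) : dot (f - g) g = dot f g - nsq g := by
  simp only [dot, nsq, Prod.fst_sub, Prod.snd_sub]; ring

lemma nsq_nonneg (e : V) : 0 ≤ nsq e := by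
  unfold nsq; positivity

lemma sq_det2_add_sq_dot (f g : V) : det2 f g ^ 2 + dot f g ^ 2 = nsq f * nsq g := by
  simp only [det2, dot, nsq]; ring

lemma isParents_sub_self_right {f g : V} (hd : det2 f g = 1) (ha : 0 ≤ dot f (g - f)) :
    IsParents f (g - f) g :=
  ⟨(add_sub_cancel f g).symm, (det2_sub_self_right f g).trans hd, ha⟩

lemma isParents_sub_self_left {f g : V} (hd : det2 f g = 1) (ha : 0 ≤ dot (f - g) g) :
    IsParents (f - g) g f :=
  ⟨(sub_add_cancel f g).symm, (det2_sub_self_left f g).trans hd, ha⟩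

lemma nsq_eq_one_of_dot_lt {f g : V} (hd : det2 f g ^ 2 = 1) (ha : 0 ≤ dot f g)
    (hf : dot f g < nsq f) (hg : dot f g < nsq g) : nsq f = 1 ∧ nsq g = 1 := by
  have hlag := sq_det2_add_sq_dot f g
  have hprod : (dot f g + 1) * (dot f g + 1) ≤ nsq f * nsq g :=
    mul_le_mul hf hg (by omega) (nsq_nonneg f)
  have hdot : dot f g = 0 := by nlinarith
  have hone : nsq f * nsq g = 1 := by rw [← hlag, hd, hdot]; norm_num
  exact ⟨Int.eq_one_of_mul_eq_one_right (nsq_nonneg f) hone,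
    Int.eq_one_of_mul_eq_one_left (nsq_nonneg g) hone⟩

lemma isParent_or_isParent_or_nsq_eq_one_of_det2_eq_one {f g : V} (hd : det2 f g = 1)
    (ha : 0 ≤ dot f g) : IsParent f g ∨ IsParent g f ∨ (nsq f = 1 ∧ nsq g = 1) := by
  by_cases hf : 0 ≤ dot f (g - f)
  · exact Or.inl ⟨g - f, Or.inl (isParents_sub_self_right hd hf)⟩
  by_cases hg : 0 ≤ dot (f - g) g
  · exact Or.inr (Or.inl ⟨f - g, Or.inr (isParents_sub_self_left hd hg)⟩)
  rw [dot_sub_self_right] at hf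
  rw [dot_sub_self_left] at hg
  exact Or.inr (Or.inr (nsq_eq_one_of_dot_lt (by rw [hd]; norm_num) ha (by omega) (by omega)))

/-- For an acute basis `(f,g)` of `ℤ²`, either `f` is a parent of `g`, or `g` is a
parent of `f`, or both are unit vectors. -/
theorem acute_basis_parent (f g : V) (hd : |det2 f g| = 1) (ha : 0 ≤ dot f g) :
    IsParent f g ∨ IsParent g f ∨ (nsq f = 1 ∧ nsq g = 1) := by
  rcases abs_eq (zero_le_one' ℤ) |>.mp hd with hfg | hfg
  · exact isParent_or_isParent_or_nsq_eq_one_of_det2_eq_one hfg ha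
  · have hgf : det2 g f = 1 := by rw [det2_comm, hfg, neg_neg]
    rcases isParent_or_isParent_or_nsq_eq_one_of_det2_eq_one hgf (dot_comm f g ▸ ha) with
      h | h | ⟨hg, hf⟩
    · exact Or.inr (Or.inl h)
    · exact Or.inl h
    · exact Or.inr (Or.inr ⟨hf, hg⟩)
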